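/- Let p ∈ [1,2] and let X be a Banach space with Rademacher type p with constant T. There exists a constant C = C(p,T) > 0 such that for every n ∈ ℕ, every even integer m ≥ 2, every odd integer k with 0 < k < m/2, and every f : ℤ_m^n → X, ∫_{ℤ_m^n} ∫_{{−1,1}^n} ‖ Σ_{j=1}^n ε_j [ ℰ_j f(x + e_j) − ℰ_j f(x − e_j) ] ‖_X^p dτ(ε) dμ(x) ≤ C Σ_{j=1}^n ∫_{ℤ_m^n} ‖f(x + e_j) − f(x)‖_X^p dμ(x). -/

import Mathlib

/-!
Write `D_j f(x) = f(x + e_j) - f(x - e_j)`. Since `ℰ_j` averages translates of `f`, it commutes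
with translations: `ℰ_j f(x + e_j) - ℰ_j f(x - e_j) = ℰ_j (D_j f)(x)`. Rademacher type, applied
for each fixed `x`, reduces the claim to bounding `∑_x ‖ℰ_j (D_j f)(x)‖^p` for each `j`. By
Jensen for the convex function `‖·‖^p` and translation invariance of counting measure, averaging
over translates is a contraction of `ℓ_p(ℤ_m^n; X)`, and `D_j f(x)` is the sum of the two edge
differences at `x` and `x - e_j`. This gives the bound with `C = 2^p T^p`.
-/

open Finset

/-- A Banach space `X` has Rademacher type `p` with constant `T`:
for every `n` and every `v : Fin n → X`,
`𝔼_ε ‖∑ j, ε j • v j‖ ^ p ≤ T ^ p * ∑ j, ‖v j‖ ^ p`, where `ε` is uniform on `{-1,1}^n`. -/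
def RademacherType (X : Type*) [NormedAddCommGroup X] [NormedSpace ℝ X] (p T : ℝ) : Prop :=
  ∀ (n : ℕ) (v : Fin n → X),
    (∑ ε : Fin n → Bool, ‖∑ j, (if ε j then (1 : ℝ) else -1) • v j‖ ^ p) / 2 ^ n ≤
      T ^ p * ∑ j, ‖v j‖ ^ p

open scoped Classical in
/-- `S(j,k)` is the set of `y ∈ ℤ_m^n` with `y_j` even, `y_l` odd for all `l ≠ j`, and
`d_{ℤ_m^n}(0,y) = ∑_i min(y_i, m - y_i) ≤ k`. -/
noncomputable def Sjk (m n k : ℕ) [NeZero m] (j : Fin n) : Finset (Fin n → ZMod m) :=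
  Finset.univ.filter fun y =>
    Even (y j).val ∧ (∀ l, l ≠ j → ¬Even (y l).val) ∧
      (∑ i, min (y i).val (m - (y i).val)) ≤ k

/-- The averaging operator `ℰ_j f(x) = (1/|S(j,k)|) ∑_{y ∈ S(j,k)} f(x + y)`. -/
noncomputable def Ecal (m n k : ℕ) [NeZero m] {X : Type*} [NormedAddCommGroup X]
    [NormedSpace ℝ X] (j : Fin n) (f : (Fin n → ZMod m) → X)
    (x : Fin n → ZMod m) : X :=
  ((Sjk m n k j).card : ℝ)⁻¹ • ∑ y ∈ Sjk m n k j, f (x + y)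

section NormRpow

variable {X : Type*} [SeminormedAddCommGroup X] {p : ℝ}

theorem convexOn_norm_rpow [NormedSpace ℝ X] (hp : 1 ≤ p) :
    ConvexOn ℝ Set.univ fun x : X => ‖x‖ ^ p := by
  refine ⟨convex_univ, fun x _ y _ a b ha hb hab => ?_⟩
  calc ‖a • x + b • y‖ ^ p ≤ (a • ‖x‖ + b • ‖y‖) ^ p := by
        gcongr
        exact (norm_add_le _ _).trans_eq
          (by simp [norm_smul, abs_of_nonneg ha, abs_of_nonneg hb])
    _ ≤ a • ‖x‖ ^ p + b • ‖y‖ ^ p :=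
        (convexOn_rpow hp).2 (norm_nonneg x) (norm_nonneg y) ha hb hab

theorem norm_average_rpow_le [NormedSpace ℝ X] (hp : 1 ≤ p) {ι : Type*} {s : Finset ι}
    (hs : s.Nonempty) (g : ι → X) :
    ‖(#s : ℝ)⁻¹ • ∑ i ∈ s, g i‖ ^ p ≤ (#s : ℝ)⁻¹ * ∑ i ∈ s, ‖g i‖ ^ p := by
  have hsum : ∑ _i ∈ s, (#s : ℝ)⁻¹ = 1 := by
    rw [sum_const, nsmul_eq_mul, mul_inv_cancel₀ (by exact_mod_cast hs.card_ne_zero)]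
  simpa only [smul_sum, mul_sum, smul_eq_mul] using
    (convexOn_norm_rpow hp).map_sum_le (fun _ _ => by positivity) hsum
      (fun i _ => Set.mem_univ (g i))

theorem norm_add_rpow_le (hp : 1 ≤ p) (a b : X) :
    ‖a + b‖ ^ p ≤ 2 ^ (p - 1) * (‖a‖ ^ p + ‖b‖ ^ p) := by
  calc ‖a + b‖ ^ p ≤ (‖a‖ + ‖b‖) ^ p := by gcongr; exact norm_add_le a b
    _ ≤ 2 ^ (p - 1) * (‖a‖ ^ p + ‖b‖ ^ p) := by
        exact_mod_cast NNReal.rpow_add_le_mul_rpow_add_rpow ‖a‖₊ ‖b‖₊ hp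

end NormRpow

section FiniteGroup

variable {G X : Type*} [AddCommGroup G] [Fintype G] [SeminormedAddCommGroup X] {p : ℝ}

theorem sum_norm_average_translate_rpow_le [NormedSpace ℝ X] (hp : 1 ≤ p) (S : Finset G)
    (g : G → X) :
    ∑ x, ‖(#S : ℝ)⁻¹ • ∑ y ∈ S, g (x + y)‖ ^ p ≤ ∑ x, ‖g x‖ ^ p := by
  rcases S.eq_empty_or_nonempty with rfl | hS
  · simpa [Real.zero_rpow (by linarith : p ≠ 0)] using sum_nonneg fun x _ => by positivity
  calc ∑ x, ‖(#S : ℝ)⁻¹ • ∑ y ∈ S, g (x + y)‖ ^ p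
      ≤ ∑ x, (#S : ℝ)⁻¹ * ∑ y ∈ S, ‖g (x + y)‖ ^ p :=
        sum_le_sum fun x _ => norm_average_rpow_le hp hS _
    _ = (#S : ℝ)⁻¹ * ∑ y ∈ S, ∑ x, ‖g (x + y)‖ ^ p := by rw [← mul_sum, sum_comm]
    _ = (#S : ℝ)⁻¹ * ∑ _y ∈ S, ∑ x, ‖g x‖ ^ p := by
        congr 1
        exact sum_congr rfl fun y _ => Equiv.sum_comp (Equiv.addRight y) fun x => ‖g x‖ ^ p
    _ = ∑ x, ‖g x‖ ^ p := by
        rw [sum_const, nsmul_eq_mul, inv_mul_cancel_left₀ (by exact_mod_cast hS.card_ne_zero)]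

theorem sum_norm_sub_translate_rpow_le (hp : 1 ≤ p) (f : G → X) (a : G) :
    ∑ x, ‖f (x + a) - f (x - a)‖ ^ p ≤ 2 ^ p * ∑ x, ‖f (x + a) - f x‖ ^ p := by
  have hback : ∑ x, ‖f x - f (x - a)‖ ^ p = ∑ x, ‖f (x + a) - f x‖ ^ p := by
    simpa [norm_sub_rev] using
      (Equiv.sum_comp (Equiv.addRight a) fun x => ‖f x - f (x - a)‖ ^ p).symm
  calc ∑ x, ‖f (x + a) - f (x - a)‖ ^ p
      ≤ ∑ x, 2 ^ (p - 1) * (‖f (x + a) - f x‖ ^ p + ‖f x - f (x - a)‖ ^ p) :=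
        sum_le_sum fun x _ => by
          simpa only [sub_add_sub_cancel] using
            norm_add_rpow_le hp (f (x + a) - f x) (f x - f (x - a))
    _ = 2 ^ (p - 1) * 2 * ∑ x, ‖f (x + a) - f x‖ ^ p := by
        rw [← mul_sum, sum_add_distrib, hback]; ring
    _ = 2 ^ p * ∑ x, ‖f (x + a) - f x‖ ^ p := by
        rw [← Real.rpow_add_one two_ne_zero, sub_add_cancel]

end FiniteGroup

theorem Ecal_add_sub_Ecal_sub {m n k : ℕ} [NeZero m] {X : Type*} [NormedAddCommGroup X]
    [NormedSpace ℝ X] (j : Fin n) (f : (Fin n → ZMod m) → X) (x a : Fin n → ZMod m) :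
    Ecal m n k j f (x + a) - Ecal m n k j f (x - a) =
      Ecal m n k j (fun z => f (z + a) - f (z - a)) x := by
  simp only [Ecal, ← smul_sub, ← sum_sub_distrib, add_right_comm x a, sub_add_eq_add_sub]

theorem RademacherType.sum_le {X : Type*} [NormedAddCommGroup X] [NormedSpace ℝ X] {p T : ℝ}
    (hX : RademacherType X p T) {n : ℕ} (v : Fin n → X) :
    ∑ ε : Fin n → Bool, ‖∑ j, (if ε j then (1 : ℝ) else -1) • v j‖ ^ p ≤
      2 ^ n * (T ^ p * ∑ j, ‖v j‖ ^ p) := by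
  rw [← div_le_iff₀' (by positivity)]
  exact hX n v

theorem sum_rademacher_Ecal_le {X : Type*} [NormedAddCommGroup X] [NormedSpace ℝ X] {p T : ℝ}
    (hp : 1 ≤ p) (hT : 0 ≤ T) (hX : RademacherType X p T) (n m k : ℕ) [NeZero m]
    (f : (Fin n → ZMod m) → X) :
    ∑ x : Fin n → ZMod m, ∑ ε : Fin n → Bool,
        ‖∑ j : Fin n, (if ε j then (1 : ℝ) else -1) •
            (Ecal m n k j f (x + Pi.single j 1) - Ecal m n k j f (x - Pi.single j 1))‖ ^ p ≤
      2 ^ n * (2 ^ p * T ^ p) *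
        ∑ j : Fin n, ∑ x : Fin n → ZMod m, ‖f (x + Pi.single j 1) - f x‖ ^ p := by
  calc _ ≤ ∑ x : Fin n → ZMod m, 2 ^ n * (T ^ p * ∑ j : Fin n,
            ‖Ecal m n k j f (x + Pi.single j 1) - Ecal m n k j f (x - Pi.single j 1)‖ ^ p) :=
        sum_le_sum fun x _ => hX.sum_le _
    _ = 2 ^ n * T ^ p * ∑ j : Fin n, ∑ x : Fin n → ZMod m,
          ‖Ecal m n k j (fun z => f (z + Pi.single j 1) - f (z - Pi.single j 1)) x‖ ^ p := by
        simp only [Ecal_add_sub_Ecal_sub, ← mul_sum, mul_assoc]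
        rw [sum_comm]
    _ ≤ 2 ^ n * T ^ p * ∑ j : Fin n,
          2 ^ p * ∑ x : Fin n → ZMod m, ‖f (x + Pi.single j 1) - f x‖ ^ p := by
        refine mul_le_mul_of_nonneg_left (sum_le_sum fun j _ => ?_) (by positivity)
        have h1 := sum_norm_average_translate_rpow_le hp (Sjk m n k j)
          (fun z => f (z + Pi.single j 1) - f (z - Pi.single j 1))
        have h2 := sum_norm_sub_translate_rpow_le hp f (Pi.single j 1 : Fin n → ZMod m)
        exact h1.trans h2
    _ = _ := by rw [← mul_sum]; ring

theorem Ecal_rademacher_bound_general (p T : ℝ) (hp₁ : 1 ≤ p) (hT : 0 ≤ T)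
    (X : Type*) [NormedAddCommGroup X] [NormedSpace ℝ X]
    (hX : RademacherType X p T) :
    ∃ C : ℝ, 0 < C ∧
      ∀ (n m k : ℕ) [NeZero m], 2 ≤ m → m % 2 = 0 → Odd k → 0 < k → 2 * k < m →
        ∀ f : (Fin n → ZMod m) → X,
          (∑ x : Fin n → ZMod m, ∑ ε : Fin n → Bool,
              ‖∑ j : Fin n, (if ε j then (1 : ℝ) else -1) •
                  (Ecal m n k j f (x + Pi.single j 1) -
                   Ecal m n k j f (x - Pi.single j 1))‖ ^ p) / ((m : ℝ) ^ n * 2 ^ n) ≤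
            C * ∑ j : Fin n,
              (∑ x : Fin n → ZMod m, ‖f (x + Pi.single j 1) - f x‖ ^ p) / (m : ℝ) ^ n := by
  refine ⟨2 ^ p * T ^ p + 1, by positivity, fun n m k _ _ _ _ _ _ f => ?_⟩
  have hm : (0 : ℝ) < (m : ℝ) ^ n := pow_pos (by exact_mod_cast (NeZero.pos m)) n
  rw [← sum_div, div_le_iff₀ (by positivity)]
  calc _ ≤ 2 ^ n * (2 ^ p * T ^ p) *
          ∑ j : Fin n, ∑ x : Fin n → ZMod m, ‖f (x + Pi.single j 1) - f x‖ ^ p :=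
        sum_rademacher_Ecal_le hp₁ hT hX n m k f
    _ ≤ 2 ^ n * (2 ^ p * T ^ p + 1) *
          ∑ j : Fin n, ∑ x : Fin n → ZMod m, ‖f (x + Pi.single j 1) - f x‖ ^ p := by
        gcongr
        linarith
    _ = _ := by field_simp

/-- If `X` has Rademacher type `p ∈ [1,2]` with constant `T`, there is `C = C(p,T) > 0` such
that for every `n`, every even `m ≥ 2`, every odd `0 < k < m/2` and every `f : ℤ_m^n → X`,
`∫∫ ‖∑_j ε_j [ℰ_j f(x+e_j) - ℰ_j f(x-e_j)]‖^p dτ(ε) dμ(x)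
  ≤ C ∑_j ∫ ‖f(x+e_j) - f(x)‖^p dμ(x)`. -/
theorem Ecal_rademacher_bound (p T : ℝ) (hp₁ : 1 ≤ p) (hp₂ : p ≤ 2) (hT : 0 ≤ T)
    (X : Type*) [NormedAddCommGroup X] [NormedSpace ℝ X] [CompleteSpace X]
    (hX : RademacherType X p T) :
    ∃ C : ℝ, 0 < C ∧
      ∀ (n m k : ℕ) [NeZero m], 2 ≤ m → m % 2 = 0 → Odd k → 0 < k → 2 * k < m →
        ∀ f : (Fin n → ZMod m) → X,
          (∑ x : Fin n → ZMod m, ∑ ε : Fin n → Bool,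
              ‖∑ j : Fin n, (if ε j then (1 : ℝ) else -1) •
                  (Ecal m n k j f (x + Pi.single j 1) -
                   Ecal m n k j f (x - Pi.single j 1))‖ ^ p) / ((m : ℝ) ^ n * 2 ^ n) ≤
            C * ∑ j : Fin n,
              (∑ x : Fin n → ZMod m, ‖f (x + Pi.single j 1) - f x‖ ^ p) / (m : ℝ) ^ n :=
  Ecal_rademacher_bound_general p T hp₁ hT X hX
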